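/- arXiv:1408.0017 — 4 statements merged into one kernel-verified Lean document; each statement's English description precedes it below -/
import Mathlib

section
/- Let P be a finite nonempty set, π⁰ a probability vector on P with all entries positive, (m^{(τ)}_p) ∈ [−1,1] for all τ and p, and (γ_τ) ∈ [0, 1/2]. Define the multiplicative-weights iterates π^{(τ+1)}_p ∝ π^{(τ)}_p(1 − γ_τ m^{(τ)}_p). Then for every horizon T and every p ∈ P: ∑_{τ=0}^{T} γ_τ ⟨m^{(τ)}, π^{(τ)}⟩ ≤ −log(min_p π⁰_p) + ∑_{τ=0}^{T} γ_τ m^{(τ)}_p + ∑_{τ=0}^{T} γ_τ² |m^{(τ)}_p|. -/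
/-!
Track the potential `log π_τ(p)`. One update changes it by `log (1 - γ m_p) - log Z_τ`, where the
normaliser is `Z_τ = 1 - γ ⟨m, π_τ⟩`. Since `-log Z ≥ 1 - Z = γ ⟨m, π_τ⟩` and
`-log (1 - x) ≤ x + x²` for `|x| ≤ 1/2`, each step gains at least `γ ⟨m, π_τ⟩ - γ m_p - γ² |m_p|`.
The potential starts at `log π_0(p) ≥ log (min π_0)` and stays `≤ 0`, so the gains telescope to
the bound.
-/

open Finset

open Real in
lemma Real.neg_log_one_sub_le_add_sq {x : ℝ} (hx : |x| ≤ 1 / 2) : -log (1 - x) ≤ x + x ^ 2 := by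
  obtain ⟨hx₁, hx₂⟩ := abs_le.mp hx
  have hpos : 0 < 1 - x := by linarith
  suffices 1 ≤ (1 - x) * exp (x + x ^ 2) by
    rw [neg_le, le_log_iff_exp_le hpos, exp_neg, inv_le_iff_one_le_mul₀ (exp_pos _)]
    linarith
  rcases le_total x 0 with hneg | hnonneg
  · -- `(1 - x)(1 + x + x²) = 1 - x³`
    nlinarith [add_one_le_exp (x + x ^ 2), pow_two_nonneg x]
  · -- `(1 - x)(1 + t + t²/2) ≥ 1` for `t = x + x²`, using `x + x² + x³ ≤ 1`
    nlinarith [quadratic_le_exp_of_nonneg (by positivity : 0 ≤ x + x ^ 2),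
      mul_nonneg hnonneg hnonneg, mul_nonneg (mul_nonneg hnonneg hnonneg) hnonneg]

lemma abs_mul_le_half {γ μ : ℝ} (hγ : γ ∈ Set.Icc (0 : ℝ) (1 / 2)) (hμ : μ ∈ Set.Icc (-1 : ℝ) 1) :
    |γ * μ| ≤ 1 / 2 := by
  rw [abs_mul, abs_of_nonneg hγ.1]
  simpa using mul_le_mul hγ.2 (abs_le.mpr hμ) (abs_nonneg μ) (by norm_num)

lemma one_sub_mul_pos {γ μ : ℝ} (hγ : γ ∈ Set.Icc (0 : ℝ) (1 / 2)) (hμ : μ ∈ Set.Icc (-1 : ℝ) 1) :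
    0 < 1 - γ * μ := by
  linarith [(abs_le.mp (abs_mul_le_half hγ hμ)).2]

lemma sq_mul_le_sq_mul_abs {γ μ : ℝ} (hμ : μ ∈ Set.Icc (-1 : ℝ) 1) : (γ * μ) ^ 2 ≤ γ ^ 2 * |μ| := by
  rw [mul_pow, ← sq_abs μ]
  gcongr
  exact pow_le_of_le_one (abs_nonneg μ) (abs_le.mpr hμ) two_ne_zero

section MultiplicativeWeights

open Real

variable {P : Type*} [Fintype P] {γ : ℝ} {m w : P → ℝ}

noncomputable def mwUpdate (γ : ℝ) (m w : P → ℝ) (p : P) : ℝ :=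
  w p * (1 - γ * m p) / ∑ q, w q * (1 - γ * m q)

lemma sum_mul_one_sub_mul (hw : ∑ q, w q = 1) :
    ∑ q, w q * (1 - γ * m q) = 1 - γ * ∑ q, m q * w q := by
  simp only [mul_sub, mul_one, sum_sub_distrib, hw, mul_sum]
  congr 1
  exact sum_congr rfl fun q _ => by ring

variable [Nonempty P]

lemma sum_mul_one_sub_mul_pos (hw : ∀ q, 0 < w q) (hγm : ∀ q, 0 < 1 - γ * m q) :
    0 < ∑ q, w q * (1 - γ * m q) :=
  sum_pos (fun q _ => mul_pos (hw q) (hγm q)) univ_nonempty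

lemma mwUpdate_pos (hw : ∀ q, 0 < w q) (hγm : ∀ q, 0 < 1 - γ * m q) (p : P) :
    0 < mwUpdate γ m w p :=
  div_pos (mul_pos (hw p) (hγm p)) (sum_mul_one_sub_mul_pos hw hγm)

lemma sum_mwUpdate (hw : ∀ q, 0 < w q) (hγm : ∀ q, 0 < 1 - γ * m q) :
    ∑ p, mwUpdate γ m w p = 1 := by
  simp only [mwUpdate]
  rw [← sum_div, div_self (sum_mul_one_sub_mul_pos hw hγm).ne']

lemma log_mwUpdate (hw : ∀ q, 0 < w q) (hsum : ∑ q, w q = 1) (hγm : ∀ q, 0 < 1 - γ * m q)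
    (p : P) :
    log (mwUpdate γ m w p) = log (w p) + log (1 - γ * m p) - log (1 - γ * ∑ q, m q * w q) := by
  have hZ := sum_mul_one_sub_mul_pos hw hγm
  rw [mwUpdate, log_div (mul_pos (hw p) (hγm p)).ne' hZ.ne', log_mul (hw p).ne' (hγm p).ne',
    sum_mul_one_sub_mul hsum]

lemma mul_sum_mul_le_log_mwUpdate_sub (hγ : γ ∈ Set.Icc (0 : ℝ) (1 / 2))
    (hm : ∀ q, m q ∈ Set.Icc (-1 : ℝ) 1) (hw : ∀ q, 0 < w q) (hsum : ∑ q, w q = 1) (p : P) :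
    γ * ∑ q, m q * w q ≤
      log (mwUpdate γ m w p) - log (w p) + γ * m p + γ ^ 2 * |m p| := by
  have hγm : ∀ q, 0 < 1 - γ * m q := fun q => one_sub_mul_pos hγ (hm q)
  have hZ : 0 < 1 - γ * ∑ q, m q * w q :=
    sum_mul_one_sub_mul hsum ▸ sum_mul_one_sub_mul_pos hw hγm
  have hnormaliser := log_le_sub_one_of_pos hZ
  have hfactor := neg_log_one_sub_le_add_sq (abs_mul_le_half hγ (hm p))
  have hsq := sq_mul_le_sq_mul_abs (γ := γ) (hm p)
  rw [log_mwUpdate hw hsum hγm]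
  linarith

end MultiplicativeWeights

theorem stmt6 {P : Type*} [Fintype P] [Nonempty P]
    (γ : ℕ → ℝ) (hγ : ∀ τ, γ τ ∈ Set.Icc (0 : ℝ) (1 / 2))
    (m : ℕ → P → ℝ) (hm : ∀ τ p, m τ p ∈ Set.Icc (-1 : ℝ) 1)
    (π : ℕ → P → ℝ)
    (hinit_pos : ∀ p, 0 < π 0 p) (hinit_sum : ∑ p, π 0 p = 1)
    (hupd : ∀ τ p, π (τ + 1) p =
      π τ p * (1 - γ τ * m τ p) / ∑ q, π τ q * (1 - γ τ * m τ q))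
    (T : ℕ) (p : P) :
    ∑ τ ∈ Finset.range (T + 1), γ τ * ∑ q, m τ q * π τ q ≤
      -Real.log (Finset.univ.inf' Finset.univ_nonempty (π 0)) +
      ∑ τ ∈ Finset.range (T + 1), γ τ * m τ p +
      ∑ τ ∈ Finset.range (T + 1), (γ τ) ^ 2 * |m τ p| := by
  have hstep : ∀ τ, π (τ + 1) = mwUpdate (γ τ) (m τ) (π τ) := fun τ => funext (hupd τ)
  have hprob : ∀ τ, (∀ q, 0 < π τ q) ∧ ∑ q, π τ q = 1 := by
    intro τ
    induction τ with
    | zero => exact ⟨hinit_pos, hinit_sum⟩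
    | succ τ ih =>
      have hγm : ∀ q, 0 < 1 - γ τ * m τ q := fun q => one_sub_mul_pos (hγ τ) (hm τ q)
      rw [hstep τ]
      exact ⟨mwUpdate_pos ih.1 hγm, sum_mwUpdate ih.1 hγm⟩
  have hgain := sum_le_sum fun τ (_ : τ ∈ range (T + 1)) =>
    hstep τ ▸ mul_sum_mul_le_log_mwUpdate_sub (hγ τ) (hm τ) (hprob τ).1 (hprob τ).2 p
  rw [sum_add_distrib, sum_add_distrib, sum_range_sub (fun τ => Real.log (π τ p))] at hgain
  have hfinal : Real.log (π (T + 1) p) ≤ 0 :=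
    Real.log_nonpos ((hprob _).1 p).le <|
      (hprob _).2 ▸ single_le_sum (fun q _ => ((hprob _).1 q).le) (mem_univ p)
  obtain ⟨q, -, hq⟩ := exists_mem_eq_inf' univ_nonempty (π 0)
  have hinit : Real.log (univ.inf' univ_nonempty (π 0)) ≤ Real.log (π 0 p) :=
    Real.log_le_log (hq ▸ hinit_pos q) (inf'_le _ (mem_univ p))
  linarith
end

section
/- The replicator (REP) update is the unique minimizer of a χ²-type regularized linearized loss: for a finite set P, ρ > 0, loss vector ℓ ∈ ℝ^P with 0 ≤ ℓ_p ≤ ρ, learning rate 0 < η ≤ 1, and strictly positive probability vector ν on P, the vector π* defined by π*_p = ν_p (1 + η(⟨ν, ℓ⟩ − ℓ_p)/ρ) is the unique minimizer over the simplex Δ^P of π ↦ ⟨π, ℓ/ρ⟩ + (1/η) R(π ‖ ν), where R(π‖ν) = (1/2)∑_p ν_p(π_p/ν_p − 1)². -/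
/-!
Write `L = ⟨ν, ℓ⟩`. Since `π*_p / ν_p - 1 = η (L - ℓ_p) / ρ`, the gradient of the regularizer
at `π*` cancels the linear loss up to the constant `L / ρ`, so expanding the square around `π*`
gives exactly
`F(π) = F(π*) + (L / ρ) (∑ π - ∑ π*) + (1 / 2η) ∑ (π_p - π*_p)² / ν_p`.
On the simplex the middle term vanishes and the last one is positive unless `π = π*`.
-/

open Finset

section

variable {P : Type*} [Fintype P]

noncomputable def repUpdate (ρ η : ℝ) (ℓ ν : P → ℝ) (p : P) : ℝ :=
  ν p * (1 + η * ((∑ q, ν q * ℓ q) - ℓ p) / ρ)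

noncomputable def repObjective (ρ η : ℝ) (ℓ ν π : P → ℝ) : ℝ :=
  (∑ p, π p * (ℓ p / ρ)) + (1 / η) * ((1 / 2) * ∑ p, ν p * (π p / ν p - 1) ^ 2)

theorem repUpdate_nonneg {ρ η : ℝ} {ℓ ν : P → ℝ} (hρ : 0 < ρ)
    (hℓ : ∀ p, ℓ p ∈ Set.Icc (0 : ℝ) ρ) (hη : 0 ≤ η) (hη1 : η ≤ 1) (hν : ∀ p, 0 ≤ ν p)
    (p : P) : 0 ≤ repUpdate ρ η ℓ ν p := by
  have hL : 0 ≤ ∑ q, ν q * ℓ q := sum_nonneg fun q _ ↦ mul_nonneg (hν q) (hℓ q).1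
  have hstep : -ρ ≤ η * ((∑ q, ν q * ℓ q) - ℓ p) := by nlinarith [(hℓ p).2]
  have hfactor : 0 ≤ 1 + η * ((∑ q, ν q * ℓ q) - ℓ p) / ρ := by
    rw [← div_self hρ.ne', ← add_div]
    exact div_nonneg (by linarith) hρ.le
  exact mul_nonneg (hν p) hfactor

theorem sum_repUpdate {ρ η : ℝ} {ℓ ν : P → ℝ} (hν : ∑ p, ν p = 1) :
    ∑ p, repUpdate ρ η ℓ ν p = 1 := by
  have hterm : ∀ p, repUpdate ρ η ℓ ν p
      = ν p + η / ρ * ((∑ q, ν q * ℓ q) * ν p) - η / ρ * (ν p * ℓ p) := fun p ↦ by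
    simp only [repUpdate]; ring
  simp only [hterm, sum_sub_distrib, sum_add_distrib, ← mul_sum, hν]
  ring

theorem repObjective_summand_eq {ρ η n L l : ℝ} (hρ : ρ ≠ 0) (hη : η ≠ 0) (hn : n ≠ 0) (x : ℝ) :
    let s := n * (1 + η * (L - l) / ρ)
    x * (l / ρ) + 1 / η * (1 / 2 * (n * (x / n - 1) ^ 2))
      = s * (l / ρ) + 1 / η * (1 / 2 * (n * (s / n - 1) ^ 2))
        + (x - s) * (L / ρ) + 1 / (2 * η) * ((x - s) ^ 2 / n) := by
  intro s
  simp only [s]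
  field_simp
  ring

theorem repObjective_eq_repUpdate_add {ρ η : ℝ} {ℓ ν : P → ℝ} (hρ : ρ ≠ 0) (hη : η ≠ 0)
    (hν : ∀ p, ν p ≠ 0) (π : P → ℝ) :
    repObjective ρ η ℓ ν π
      = repObjective ρ η ℓ ν (repUpdate ρ η ℓ ν)
        + (∑ q, ν q * ℓ q) / ρ * (∑ p, π p - ∑ p, repUpdate ρ η ℓ ν p)
        + 1 / (2 * η) * ∑ p, (π p - repUpdate ρ η ℓ ν p) ^ 2 / ν p := by
  have hsum := sum_congr rfl fun p (_ : p ∈ univ) ↦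
    repObjective_summand_eq (L := ∑ q, ν q * ℓ q) (l := ℓ p) hρ hη (hν p) (π p)
  simp only [sum_add_distrib, ← mul_sum, ← sum_mul, sum_sub_distrib] at hsum
  simp only [repObjective, repUpdate]
  linarith

theorem sum_sq_div_pos_of_ne {ν x y : P → ℝ} (hν : ∀ p, 0 < ν p) (hxy : x ≠ y) :
    0 < ∑ p, (x p - y p) ^ 2 / ν p := by
  obtain ⟨p, hp⟩ := Function.ne_iff.mp hxy
  refine sum_pos' (fun q _ ↦ div_nonneg (sq_nonneg _) (hν q).le) ⟨p, mem_univ p, ?_⟩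
  exact div_pos (sq_pos_of_ne_zero (sub_ne_zero.mpr hp)) (hν p)

end

theorem stmt10_general {P : Type*} [Fintype P]
    (ρ : ℝ) (hρ : 0 < ρ) (ℓ : P → ℝ) (hℓ : ∀ p, ℓ p ∈ Set.Icc (0 : ℝ) ρ)
    (η : ℝ) (hη : 0 < η) (hη1 : η ≤ 1)
    (ν : P → ℝ) (hν_pos : ∀ p, 0 < ν p) (hν_sum : ∑ p, ν p = 1)
    (πs : P → ℝ)
    (hπs : ∀ p, πs p = ν p * (1 + η * ((∑ q, ν q * ℓ q) - ℓ p) / ρ)) :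
    ((∀ p, 0 ≤ πs p) ∧ ∑ p, πs p = 1) ∧
    ∀ π : P → ℝ, (∀ p, 0 ≤ π p) → ∑ p, π p = 1 → π ≠ πs →
      (∑ p, πs p * (ℓ p / ρ)) + (1 / η) * ((1 / 2) * ∑ p, ν p * (πs p / ν p - 1) ^ 2) <
      (∑ p, π p * (ℓ p / ρ)) + (1 / η) * ((1 / 2) * ∑ p, ν p * (π p / ν p - 1) ^ 2) := by
  obtain rfl : πs = repUpdate ρ η ℓ ν := funext hπs
  have hσ_sum := sum_repUpdate (ρ := ρ) (η := η) (ℓ := ℓ) hν_sum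
  refine ⟨⟨repUpdate_nonneg hρ hℓ hη.le hη1 fun p ↦ (hν_pos p).le, hσ_sum⟩, ?_⟩
  intro π _ hπ_sum hπ_ne
  change repObjective ρ η ℓ ν _ < repObjective ρ η ℓ ν π
  rw [repObjective_eq_repUpdate_add hρ.ne' hη.ne' (fun p ↦ (hν_pos p).ne') π, hπ_sum, hσ_sum,
    sub_self, mul_zero, add_zero, lt_add_iff_pos_right]
  exact mul_pos (by positivity) (sum_sq_div_pos_of_ne hν_pos hπ_ne)

theorem stmt10 {P : Type*} [Fintype P] [Nonempty P]
    (ρ : ℝ) (hρ : 0 < ρ) (ℓ : P → ℝ) (hℓ : ∀ p, ℓ p ∈ Set.Icc (0 : ℝ) ρ)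
    (η : ℝ) (hη : 0 < η) (hη1 : η ≤ 1)
    (ν : P → ℝ) (hν_pos : ∀ p, 0 < ν p) (hν_sum : ∑ p, ν p = 1)
    (πs : P → ℝ)
    (hπs : ∀ p, πs p = ν p * (1 + η * ((∑ q, ν q * ℓ q) - ℓ p) / ρ)) :
    ((∀ p, 0 ≤ πs p) ∧ ∑ p, πs p = 1) ∧
    ∀ π : P → ℝ, (∀ p, 0 ≤ π p) → ∑ p, π p = 1 → π ≠ πs →
      (∑ p, πs p * (ℓ p / ρ)) + (1 / η) * ((1 / 2) * ∑ p, ν p * (πs p / ν p - 1) ^ 2) <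
      (∑ p, π p * (ℓ p / ρ)) + (1 / η) * ((1 / 2) * ∑ p, ν p * (π p / ν p - 1) ^ 2) :=
  stmt10_general ρ hρ ℓ hℓ η hη hη1 ν hν_pos hν_sum πs hπs
end

section
/- Discounted regret bound for the REP algorithm: let P be finite, ρ > 0, ℓ^{(τ)} ∈ [0,ρ]^P, and (γ_τ) a sequence in (0, 1/2]. Define π^{(τ+1)}_p = π^{(τ)}_p(1 + γ_τ(⟨π^{(τ)}, ℓ^{(τ)}⟩ − ℓ^{(τ)}_p)/ρ) starting from a strictly positive probability vector π^{(0)}. Then for all T: ∑_{τ=0}^T γ_τ ⟨π^{(τ)}, ℓ^{(τ)}⟩ − min_{p∈P} ∑_{τ=0}^T γ_τ ℓ^{(τ)}_p ≤ −ρ log(min_p π^{(0)}_p) + ρ ∑_{τ=0}^T γ_τ². -/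
/-!
Write the update as `π (τ + 1) p = π τ p * (1 + x τ)` with
`x τ = γ τ * (⟨π τ, ℓ τ⟩ - ℓ τ p) / ρ`, so that `|x τ| ≤ γ τ ≤ 1 / 2`. The signed losses are
orthogonal to `π τ`, so the update stays in the probability simplex and `π (T + 1) p ≤ 1`.
Taking logarithms and using `x - x ^ 2 ≤ log (1 + x)` for `x ≥ -1/2` gives
`∑ x τ - ∑ γ τ ^ 2 ≤ log (π (T + 1) p) - log (π 0 p) ≤ -log (π 0 p)`; multiplying by `ρ` and
taking `p` to be the best expert yields the bound.
-/

open Finset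

theorem Real.sub_sq_le_log_one_add {x : ℝ} (hx : -(1 / 2) ≤ x) : x - x ^ 2 ≤ Real.log (1 + x) := by
  rcases le_total 0 x with hx₀ | hx₀
  · calc x - x ^ 2 ≤ 2 * x / (x + 2) := by
          rw [le_div_iff₀ (by linarith)]; nlinarith [mul_nonneg hx₀ (sq_nonneg x)]
      _ ≤ Real.log (1 + x) := Real.le_log_one_add_of_nonneg hx₀
  · -- `log (1 + y) - (y - y ^ 2)` has derivative `y (1 + 2 y) / (1 + y) ≤ 0` on `[-1/2, 0]`
    let f : ℝ → ℝ := fun y ↦ Real.log (1 + y) - (y - y ^ 2)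
    have hf : AntitoneOn f (Set.Icc (-(1 / 2)) 0) := by
      refine antitoneOn_of_hasDerivWithinAt_nonpos (f' := fun y ↦ (1 + y)⁻¹ - (1 - 2 * y))
        (convex_Icc _ _) ?_ (fun y hy ↦ ?_) (fun y hy ↦ ?_)
      · exact ContinuousOn.sub (ContinuousOn.log (by fun_prop) fun y hy ↦ by linarith [hy.1])
          (by fun_prop)
      · rw [interior_Icc] at hy
        have hy₁ : 1 + y ≠ 0 := by linarith [hy.1]
        exact ((((hasDerivAt_id y).const_add 1).log hy₁).sub
          ((hasDerivAt_id y).sub (hasDerivAt_pow 2 y))).hasDerivWithinAt.congr_deriv (by simp)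
      · rw [interior_Icc] at hy
        have hy₁ : 0 < 1 + y := by linarith [hy.1]
        rw [sub_nonpos, inv_le_iff_one_le_mul₀ hy₁]
        nlinarith [hy.1, hy.2]
    simpa [f] using hf ⟨hx, hx₀⟩ ⟨by norm_num, le_rfl⟩ hx₀

theorem sum_sub_sq_le_log_sub_log {w x : ℕ → ℝ} (hw₀ : 0 < w 0) (hx : ∀ τ, -(1 / 2) ≤ x τ)
    (hw : ∀ τ, w (τ + 1) = w τ * (1 + x τ)) (N : ℕ) :
    ∑ τ ∈ range N, (x τ - x τ ^ 2) ≤ Real.log (w N) - Real.log (w 0) := by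
  have hpos : ∀ τ, 0 < w τ := Nat.rec hw₀ fun τ ih ↦ hw τ ▸ mul_pos ih (by linarith [hx τ])
  rw [← sum_range_sub (fun τ ↦ Real.log (w τ))]
  refine sum_le_sum fun τ _ ↦ ?_
  rw [hw, Real.log_mul (hpos τ).ne' (by linarith [hx τ]), add_sub_cancel_left]
  exact Real.sub_sq_le_log_one_add (hx τ)

section Simplex

variable {P : Type*} [Fintype P]

theorem sum_mul_inner_sub_eq_zero {π : P → ℝ} (hπ : ∑ p, π p = 1) (ℓ : P → ℝ) :
    ∑ p, π p * ((∑ q, π q * ℓ q) - ℓ p) = 0 := by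
  simp only [mul_sub, sum_sub_distrib, ← sum_mul, hπ, one_mul, sub_self]

theorem mul_one_add_mem_stdSimplex {π m : P → ℝ} (hπ : π ∈ stdSimplex ℝ P)
    (hm : ∑ p, π p * m p = 0) (hm₁ : ∀ p, -1 ≤ m p) :
    (fun p ↦ π p * (1 + m p)) ∈ stdSimplex ℝ P :=
  ⟨fun p ↦ mul_nonneg (hπ.1 p) (by linarith [hm₁ p]),
    by simp only [mul_one_add, sum_add_distrib, hπ.2, hm, add_zero]⟩

theorem abs_inner_sub_le {π ℓ : P → ℝ} (hπ : π ∈ stdSimplex ℝ P) {ρ : ℝ}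
    (hℓ : ∀ p, ℓ p ∈ Set.Icc 0 ρ) (p : P) : |(∑ q, π q * ℓ q) - ℓ p| ≤ ρ := by
  have h₀ : 0 ≤ ∑ q, π q * ℓ q := sum_nonneg fun q _ ↦ mul_nonneg (hπ.1 q) (hℓ q).1
  have hρ : ∑ q, π q * ℓ q ≤ ρ := calc
    _ ≤ ∑ q, π q * ρ := sum_le_sum fun q _ ↦ mul_le_mul_of_nonneg_left (hℓ q).2 (hπ.1 q)
    _ = ρ := by rw [← sum_mul, hπ.2, one_mul]
  rw [abs_le]
  constructor <;> linarith [(hℓ p).1, (hℓ p).2]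

theorem abs_mul_inner_sub_div_le {π ℓ : P → ℝ} (hπ : π ∈ stdSimplex ℝ P) {ρ : ℝ} (hρ : 0 < ρ)
    (hℓ : ∀ p, ℓ p ∈ Set.Icc 0 ρ) {γ : ℝ} (hγ : 0 ≤ γ) (p : P) :
    |γ * ((∑ q, π q * ℓ q) - ℓ p) / ρ| ≤ γ := by
  rw [abs_div, abs_mul, abs_of_nonneg hγ, abs_of_pos hρ, div_le_iff₀ hρ]
  exact mul_le_mul_of_nonneg_left (abs_inner_sub_le hπ hℓ p) hγ

end Simplex

section REP

variable {P : Type*} [Fintype P] {ρ : ℝ} {ℓ : ℕ → P → ℝ} {γ : ℕ → ℝ} {π : ℕ → P → ℝ}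

theorem rep_mem_stdSimplex (hρ : 0 < ρ) (hℓ : ∀ τ p, ℓ τ p ∈ Set.Icc 0 ρ)
    (hγ : ∀ τ, γ τ ∈ Set.Icc 0 1) (hπ₀ : π 0 ∈ stdSimplex ℝ P)
    (hupd : ∀ τ p, π (τ + 1) p = π τ p * (1 + γ τ * ((∑ q, π τ q * ℓ τ q) - ℓ τ p) / ρ)) :
    ∀ τ, π τ ∈ stdSimplex ℝ P
  | 0 => hπ₀
  | τ + 1 => by
    have hπ := rep_mem_stdSimplex hρ hℓ hγ hπ₀ hupd τ
    rw [funext (hupd τ)]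
    refine mul_one_add_mem_stdSimplex hπ ?_ fun p ↦ ?_
    · calc _ = γ τ / ρ * ∑ p, π τ p * ((∑ q, π τ q * ℓ τ q) - ℓ τ p) := by
            rw [mul_sum]; congr! 1 with p; ring
        _ = 0 := by rw [sum_mul_inner_sub_eq_zero hπ.2, mul_zero]
    · have := abs_le.1 (abs_mul_inner_sub_div_le hπ hρ (hℓ τ) (hγ τ).1 p)
      linarith [(hγ τ).2]

theorem rep_regret_le (hρ : 0 < ρ) (hℓ : ∀ τ p, ℓ τ p ∈ Set.Icc 0 ρ)
    (hγ : ∀ τ, γ τ ∈ Set.Icc 0 (1 / 2)) (hπ₀ : π 0 ∈ stdSimplex ℝ P)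
    (hupd : ∀ τ p, π (τ + 1) p = π τ p * (1 + γ τ * ((∑ q, π τ q * ℓ τ q) - ℓ τ p) / ρ))
    {p : P} (hp : 0 < π 0 p) (N : ℕ) :
    ∑ τ ∈ range N, γ τ * ∑ q, π τ q * ℓ τ q - ∑ τ ∈ range N, γ τ * ℓ τ p ≤
      -ρ * Real.log (π 0 p) + ρ * ∑ τ ∈ range N, γ τ ^ 2 := by
  set x : ℕ → ℝ := fun τ ↦ γ τ * ((∑ q, π τ q * ℓ τ q) - ℓ τ p) / ρ
  have hπ := rep_mem_stdSimplex hρ hℓ (fun τ ↦ ⟨(hγ τ).1, by linarith [(hγ τ).2]⟩) hπ₀ hupd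
  have hx : ∀ τ, |x τ| ≤ γ τ := fun τ ↦ abs_mul_inner_sub_div_le (hπ τ) hρ (hℓ τ) (hγ τ).1 p
  have hlog := sum_sub_sq_le_log_sub_log (w := fun τ ↦ π τ p) (x := x) hp
    (fun τ ↦ by linarith [(abs_le.1 (hx τ)).1, (hγ τ).2]) (fun τ ↦ hupd τ p) N
  have hlogN : Real.log (π N p) ≤ 0 := Real.log_nonpos (mem_Icc_of_mem_stdSimplex (hπ N) p).1
    (mem_Icc_of_mem_stdSimplex (hπ N) p).2
  have hsq : ∑ τ ∈ range N, x τ ^ 2 ≤ ∑ τ ∈ range N, γ τ ^ 2 :=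
    sum_le_sum fun τ _ ↦ sq_abs (x τ) ▸ pow_le_pow_left₀ (abs_nonneg _) (hx τ) 2
  rw [sum_sub_distrib] at hlog
  calc _ = ρ * ∑ τ ∈ range N, x τ := by
        rw [mul_sum, ← sum_sub_distrib]; congr! 1 with τ
        rw [mul_div_cancel₀ _ hρ.ne', mul_sub]
    _ ≤ ρ * (-Real.log (π 0 p) + ∑ τ ∈ range N, γ τ ^ 2) := by gcongr; linarith
    _ = _ := by ring

end REP

theorem stmt12 {P : Type*} [Fintype P] [Nonempty P]
    (ρ : ℝ) (hρ : 0 < ρ)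
    (ℓ : ℕ → P → ℝ) (hℓ : ∀ τ p, ℓ τ p ∈ Set.Icc (0 : ℝ) ρ)
    (γ : ℕ → ℝ) (hγ : ∀ τ, γ τ ∈ Set.Ioc (0 : ℝ) (1 / 2))
    (π : ℕ → P → ℝ)
    (hinit_pos : ∀ p, 0 < π 0 p) (hinit_sum : ∑ p, π 0 p = 1)
    (hupd : ∀ τ p, π (τ + 1) p =
      π τ p * (1 + γ τ * ((∑ q, π τ q * ℓ τ q) - ℓ τ p) / ρ))
    (T : ℕ) :
    ∑ τ ∈ Finset.range (T + 1), γ τ * ∑ q, π τ q * ℓ τ q -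
      Finset.univ.inf' Finset.univ_nonempty
        (fun p => ∑ τ ∈ Finset.range (T + 1), γ τ * ℓ τ p) ≤
      -ρ * Real.log (Finset.univ.inf' Finset.univ_nonempty (π 0)) +
      ρ * ∑ τ ∈ Finset.range (T + 1), (γ τ) ^ 2 := by
  obtain ⟨p, -, hp⟩ := exists_mem_eq_inf' univ_nonempty
    fun p ↦ ∑ τ ∈ range (T + 1), γ τ * ℓ τ p
  have hlog : Real.log (univ.inf' univ_nonempty (π 0)) ≤ Real.log (π 0 p) :=
    Real.log_le_log ((lt_inf'_iff _).2 fun q _ ↦ hinit_pos q) (inf'_le _ (mem_univ p))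
  have hregret := rep_regret_le hρ hℓ (fun τ ↦ Set.Ioc_subset_Icc_self (hγ τ))
    ⟨fun q ↦ (hinit_pos q).le, hinit_sum⟩ hupd (hinit_pos p) (T + 1)
  rw [hp]
  linarith [mul_le_mul_of_nonneg_left hlog hρ.le]
end

section
/- In a nonatomic congestion game with nondecreasing continuous congestion functions, the set of Nash equilibria equals the set of minimizers over the product of simplexes Δ of the Rosenthal potential V(μ) = ∑_{r∈R} ∫_0^{(M̄μ)_r} c_r(u) du, and this set is nonempty, convex, and compact. -/
/-!
The Rosenthal potential `V` is a sum of primitives of monotone functions composed with the linear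
load map `μ ↦ M̄μ`, so it lies above its tangent planes (hence is convex), and its derivative at `μ`
is the linear functional `ν ↦ ∑_k m_k ∑_p ν^k_p ℓ^k_p(μ)`. On the convex set `Δ`, a point therefore
minimizes `V` iff it minimizes this functional, which splits over the populations; and a linear
functional is minimized at a point of a simplex iff that point only charges bundles of minimal
cost, which is the Nash condition. Existence follows from compactness of `Δ`, and the minimizers
form a closed sublevel set of the convex function `V`.
-/

open Finset

theorem Monotone.mul_sub_le_integral {c : ℝ → ℝ} (hc : Monotone c) (a b : ℝ) :
    c a * (b - a) ≤ ∫ u in a..b, c u := by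
  rcases le_total a b with hab | hba
  · simpa [mul_comm] using intervalIntegral.integral_mono_on hab intervalIntegrable_const
      (hc.intervalIntegrable (μ := MeasureTheory.volume)) fun u hu => hc hu.1
  · have := intervalIntegral.integral_mono_on hba
      (hc.intervalIntegrable (μ := MeasureTheory.volume)) (intervalIntegrable_const (c := c a))
      fun u hu => hc hu.2
    rw [intervalIntegral.integral_symm]
    simp only [intervalIntegral.integral_const, smul_eq_mul] at this
    linarith

theorem sep_forall_le_eq_sep_le {α β : Type*} [Preorder β] {f : α → β} {K : Set α} {x₀ : α}
    (hx₀ : x₀ ∈ K) (hmin : IsMinOn f K x₀) :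
    {x ∈ K | ∀ y ∈ K, f x ≤ f y} = {x ∈ K | f x ≤ f x₀} := by
  ext x
  exact and_congr_right fun _ => ⟨fun hx => hx x₀ hx₀, fun hx _ hy => hx.trans (hmin hy)⟩

theorem isMinOn_sum_univ_pi_iff {ι : Type*} [Fintype ι] {α : ι → Type*} {S : ∀ k, Set (α k)}
    {f : ∀ k, α k → ℝ} {x : ∀ k, α k} (hx : x ∈ Set.univ.pi S) :
    IsMinOn (fun y => ∑ k, f k (y k)) (Set.univ.pi S) x ↔ ∀ k, IsMinOn (f k) (S k) (x k) := by
  classical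
  refine ⟨fun hmin k z hz => ?_, fun hmin => isMinOn_iff.2 fun y hy =>
    Finset.sum_le_sum fun k _ => hmin k (hy k (Set.mem_univ k))⟩
  have := isMinOn_iff.1 hmin _ ((Set.update_mem_pi_iff_of_mem hx).2 fun _ => hz)
  simp only [Function.apply_update f x, Finset.sum_update_of_mem (Finset.mem_univ k),
    Finset.sum_eq_add_sum_sdiff_singleton_of_mem (Finset.mem_univ k) fun k => f k (x k)] at this
  exact le_of_add_le_add_right this

section Linearization

variable {E : Type*} [NormedAddCommGroup E] [NormedSpace ℝ E] {K : Set E} {f : E → ℝ}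

theorem convexOn_of_le_add_linearization (hK : Convex ℝ K) (f' : E → E →L[ℝ] ℝ)
    (hf' : ∀ x ∈ K, ∀ y ∈ K, f x + f' x (y - x) ≤ f y) : ConvexOn ℝ K f := by
  refine ⟨hK, fun x hx y hy a b ha hb hab => ?_⟩
  set z := a • x + b • y
  have hz : z ∈ K := hK hx hy ha hb hab
  have hx' := mul_le_mul_of_nonneg_left (hf' z hz x hx) ha
  have hy' := mul_le_mul_of_nonneg_left (hf' z hz y hy) hb
  have hbalance : a * f' z (x - z) + b * f' z (y - z) = 0 := by
    rw [← smul_eq_mul, ← smul_eq_mul, ← map_smul, ← map_smul, ← map_add, smul_sub, smul_sub,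
      sub_add_sub_comm, ← add_smul, hab, one_smul, sub_self, map_zero]
  have hfz : f z = a * f z + b * f z := by rw [← add_mul, hab, one_mul]
  rw [mul_add] at hx' hy'
  simp only [smul_eq_mul]
  linarith

theorem isMinOn_iff_isMinOn_linearization {f' : E →L[ℝ] ℝ} {x : E} (hK : Convex ℝ K)
    (hx : x ∈ K) (hf : HasFDerivWithinAt f f' K x) (hf' : ∀ y ∈ K, f x + f' (y - x) ≤ f y) :
    IsMinOn f K x ↔ IsMinOn f' K x := by
  refine ⟨fun hmin y hy => ?_, fun hmin y hy => ?_⟩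
  · have := hmin.localize.hasFDerivWithinAt_nonneg hf
      (sub_mem_posTangentConeAt_of_segment_subset (hK.segment_subset hx hy))
    rwa [map_sub, sub_nonneg] at this
  · have hgrad := hf' y hy
    have hlin : f' x ≤ f' y := hmin hy
    rw [map_sub] at hgrad
    show f x ≤ f y
    linarith

end Linearization

section Simplex

variable {α : Type*}

def simplexOn (s : Finset α) : Set (α → ℝ) :=
  {x | (∀ p, 0 ≤ x p) ∧ (∀ p ∉ s, x p = 0) ∧ ∑ p ∈ s, x p = 1}

theorem le_one_of_mem_simplexOn {s : Finset α} {x : α → ℝ} (hx : x ∈ simplexOn s) (p : α) :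
    x p ≤ 1 := by
  obtain ⟨hnonneg, hzero, hsum⟩ := hx
  by_cases hp : p ∈ s
  · exact hsum ▸ Finset.single_le_sum (fun q _ => hnonneg q) hp
  · exact (hzero p hp).trans_le zero_le_one

theorem simplexOn_nonempty {s : Finset α} (hs : s.Nonempty) : (simplexOn s).Nonempty := by
  classical
  obtain ⟨p, hp⟩ := hs
  refine ⟨Pi.single p 1, fun q => ?_, fun q hq => ?_, ?_⟩
  · by_cases h : q = p <;> simp [h]
  · exact Pi.single_eq_of_ne (by rintro rfl; exact hq hp) 1
  · rw [Finset.sum_pi_single', if_pos hp]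

theorem convex_simplexOn (s : Finset α) : Convex ℝ (simplexOn s) := by
  rintro x ⟨hx₀, hx₁, hx₂⟩ y ⟨hy₀, hy₁, hy₂⟩ a b ha hb hab
  refine ⟨fun p => ?_, fun p hp => ?_, ?_⟩
  · have := hx₀ p
    have := hy₀ p
    simp only [Pi.add_apply, Pi.smul_apply, smul_eq_mul]
    positivity
  · simp [hx₁ p hp, hy₁ p hp]
  · simp only [Pi.add_apply, Pi.smul_apply, smul_eq_mul]
    rw [Finset.sum_add_distrib, ← Finset.mul_sum, ← Finset.mul_sum, hx₂, hy₂, mul_one, mul_one,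
      hab]

theorem isClosed_simplexOn (s : Finset α) : IsClosed (simplexOn s) := by
  simp only [simplexOn, Set.ofPred_and, Set.ofPred_forall]
  refine .inter (isClosed_iInter fun p => isClosed_le continuous_const (continuous_apply p)) <|
    .inter (isClosed_iInter fun p => isClosed_iInter fun _ =>
      isClosed_eq (continuous_apply p) continuous_const) <|
    isClosed_eq (continuous_finsetSum s fun p _ => continuous_apply p) continuous_const

theorem isCompact_simplexOn [Finite α] (s : Finset α) : IsCompact (simplexOn s) :=
  (isCompact_univ_pi fun _ => isCompact_Icc).of_isClosed_subset (isClosed_simplexOn s)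
    fun _ hx p _ => ⟨hx.1 p, le_one_of_mem_simplexOn hx p⟩

theorem isMinOn_simplexOn_iff {s : Finset α} {x : α → ℝ} (hx : x ∈ simplexOn s) (L : α → ℝ) :
    IsMinOn (fun y => ∑ p ∈ s, y p * L p) (simplexOn s) x ↔
      ∀ p ∈ s, 0 < x p → ∀ p' ∈ s, L p ≤ L p' := by
  classical
  obtain ⟨hx₀, hx₁, hx₂⟩ := hx
  constructor
  · intro hmin p hp hpos p' hp'
    set y := x + Pi.single p' (x p) - Pi.single p (x p)
    have hy : y ∈ simplexOn s := by
      refine ⟨fun q => ?_, fun q hq => ?_, ?_⟩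
      · have h₁ : (Pi.single p (x p) : α → ℝ) q ≤ x q := by
          by_cases h : q = p <;> simp [h, hx₀]
        have h₂ : 0 ≤ (Pi.single p' (x p) : α → ℝ) q := by
          by_cases h : q = p' <;> simp [h, hx₀]
        simp only [y, Pi.add_apply, Pi.sub_apply]
        linarith
      · have h₁ : q ≠ p := by rintro rfl; exact hq hp
        have h₂ : q ≠ p' := by rintro rfl; exact hq hp'
        simp [y, hx₁ q hq, h₁, h₂]
      · simp [y, Finset.sum_add_distrib, Finset.sum_sub_distrib, Finset.sum_pi_single', hp, hp',
          hx₂]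
    have hshift : ∑ q ∈ s, y q * L q = ∑ q ∈ s, x q * L q + x p * (L p' - L p) := by
      simp [y, add_mul, sub_mul, Finset.sum_add_distrib, Finset.sum_sub_distrib, Pi.single_apply,
        hp, hp']
      ring
    have := isMinOn_iff.1 hmin y hy
    simp only [hshift, le_add_iff_nonneg_right] at this
    exact sub_nonneg.1 (nonneg_of_mul_nonneg_right this hpos)
  · intro hnash y ⟨hy₀, _, hy₂⟩
    obtain ⟨p₀, hp₀, hpos⟩ : ∃ p₀ ∈ s, 0 < x p₀ := by
      by_contra! h
      linarith [Finset.sum_nonpos h]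
    calc ∑ p ∈ s, x p * L p ≤ ∑ p ∈ s, x p * L p₀ :=
          Finset.sum_le_sum fun p hp => (hx₀ p).eq_or_lt.elim (fun h => by simp [← h])
            fun h => mul_le_mul_of_nonneg_left (hnash p hp h p₀ hp₀) h.le
      _ = ∑ p ∈ s, y p * L p₀ := by rw [← Finset.sum_mul, ← Finset.sum_mul, hx₂, hy₂]
      _ ≤ ∑ p ∈ s, y p * L p :=
          Finset.sum_le_sum fun p hp => mul_le_mul_of_nonneg_left (hnash p₀ hp₀ hpos p hp) (hy₀ p)

end Simplex

namespace CongestionGame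

variable {R ι : Type*} [Fintype R] [DecidableEq R] [Fintype ι]
  (Pb : ι → Finset (Finset R)) (m : ι → ℝ) (c : R → ℝ → ℝ)

def load (r : R) : (ι → Finset R → ℝ) →L[ℝ] ℝ :=
  ∑ k, m k • ∑ p ∈ (Pb k).filter (fun p => r ∈ p),
    (ContinuousLinearMap.proj p).comp (ContinuousLinearMap.proj k)

omit [Fintype R] in
theorem load_apply (r : R) (μ : ι → Finset R → ℝ) :
    load Pb m r μ = ∑ k, m k * ∑ p ∈ (Pb k).filter (fun p => r ∈ p), μ k p := by
  simp [load]

theorem sum_smul_load_apply (g : R → ℝ) (μ : ι → Finset R → ℝ) :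
    (∑ r, g r • load Pb m r) μ = ∑ k, ∑ p ∈ Pb k, μ k p * (m k * ∑ r ∈ p, g r) := by
  simp only [_root_.sum_apply, smul_apply, load_apply, smul_eq_mul, Finset.mul_sum,
    Finset.sum_filter]
  rw [Finset.sum_comm]
  refine Finset.sum_congr rfl fun k _ => ?_
  rw [Finset.sum_comm]
  refine Finset.sum_congr rfl fun p _ => ?_
  simp only [mul_ite, mul_zero, ← Finset.sum_filter, Finset.filter_univ_mem]
  exact Finset.sum_congr rfl fun r _ => by ring

noncomputable def potential (μ : ι → Finset R → ℝ) : ℝ :=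
  ∑ r, ∫ u in (0 : ℝ)..load Pb m r μ, c r u

def bundleCost (μ : ι → Finset R → ℝ) (p : Finset R) : ℝ :=
  ∑ r ∈ p, c r (load Pb m r μ)

def potentialDeriv (μ : ι → Finset R → ℝ) : (ι → Finset R → ℝ) →L[ℝ] ℝ :=
  ∑ r, c r (load Pb m r μ) • load Pb m r

def IsNashEquilibrium (μ : ι → Finset R → ℝ) : Prop :=
  μ ∈ Set.univ.pi (fun k => simplexOn (Pb k)) ∧
    ∀ k, ∀ p ∈ Pb k, 0 < μ k p → ∀ p' ∈ Pb k, bundleCost Pb m c μ p ≤ bundleCost Pb m c μ p'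

theorem potentialDeriv_apply (μ ν : ι → Finset R → ℝ) :
    potentialDeriv Pb m c μ ν = ∑ k, ∑ p ∈ Pb k, ν k p * (m k * bundleCost Pb m c μ p) :=
  sum_smul_load_apply Pb m _ ν

theorem hasFDerivAt_potential (hc : ∀ r, Continuous (c r)) (μ : ι → Finset R → ℝ) :
    HasFDerivAt (potential Pb m c) (potentialDeriv Pb m c μ) μ :=
  HasFDerivAt.fun_sum fun r _ =>
    ((hc r).integral_hasStrictDerivAt 0 _).hasDerivAt.comp_hasFDerivAt μ (load Pb m r).hasFDerivAt

theorem potential_add_potentialDeriv_le (hc : ∀ r, Monotone (c r)) (μ ν : ι → Finset R → ℝ) :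
    potential Pb m c μ + potentialDeriv Pb m c μ (ν - μ) ≤ potential Pb m c ν := by
  rw [← le_sub_iff_add_le', potential, potential, ← Finset.sum_sub_distrib, potentialDeriv,
    _root_.sum_apply]
  refine Finset.sum_le_sum fun r _ => ?_
  rw [intervalIntegral.integral_interval_sub_left (hc r).intervalIntegrable
    (hc r).intervalIntegrable, smul_apply, map_sub, smul_eq_mul]
  exact (hc r).mul_sub_le_integral _ _

theorem convexOn_potential (hc : ∀ r, Monotone (c r)) :
    ConvexOn ℝ (Set.univ.pi fun k => simplexOn (Pb k)) (potential Pb m c) :=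
  convexOn_of_le_add_linearization (convex_pi fun k _ => convex_simplexOn (Pb k))
    (potentialDeriv Pb m c) fun μ _ ν _ => potential_add_potentialDeriv_le Pb m c hc μ ν

theorem setOf_isNashEquilibrium_eq (hm : ∀ k, 0 < m k) (hc_cont : ∀ r, Continuous (c r))
    (hc_mono : ∀ r, Monotone (c r)) :
    {μ | IsNashEquilibrium Pb m c μ} =
      {μ ∈ Set.univ.pi fun k => simplexOn (Pb k) |
        IsMinOn (potential Pb m c) (Set.univ.pi fun k => simplexOn (Pb k)) μ} := by
  ext μ
  refine and_congr_right fun hμ => ?_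
  rw [isMinOn_iff_isMinOn_linearization (convex_pi fun k _ => convex_simplexOn (Pb k)) hμ
    (hasFDerivAt_potential Pb m c hc_cont μ).hasFDerivWithinAt
    fun ν _ => potential_add_potentialDeriv_le Pb m c hc_mono μ ν,
    show ⇑(potentialDeriv Pb m c μ) = _ from funext (potentialDeriv_apply Pb m c μ),
    isMinOn_sum_univ_pi_iff (f := fun k y => ∑ p ∈ Pb k, y p * (m k * bundleCost Pb m c μ p)) hμ]
  refine forall_congr' fun k => ?_
  rw [isMinOn_simplexOn_iff (hμ k (Set.mem_univ k))]
  simp only [mul_le_mul_iff_right₀ (hm k)]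

end CongestionGame

open CongestionGame in
theorem stmt14_general {R ι : Type*} [Fintype R] [DecidableEq R] [Fintype ι]
    (Pb : ι → Finset (Finset R)) (hPb : ∀ k, (Pb k).Nonempty)
    (m : ι → ℝ) (hm : ∀ k, 0 < m k)
    (c : R → ℝ → ℝ) (hc_cont : ∀ r, Continuous (c r)) (hc_mono : ∀ r, Monotone (c r))
    (Δ : Set (ι → Finset R → ℝ))
    (hΔ : Δ = {μ | ∀ k, (∀ p, 0 ≤ μ k p) ∧ (∀ p ∉ Pb k, μ k p = 0) ∧
      ∑ p ∈ Pb k, μ k p = 1})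
    (φ : (ι → Finset R → ℝ) → R → ℝ)
    (hφ : ∀ μ r, φ μ r = ∑ k, m k * ∑ p ∈ (Pb k).filter (fun p => r ∈ p), μ k p)
    (ℓ : (ι → Finset R → ℝ) → ι → Finset R → ℝ)
    (hℓ : ∀ μ k p, ℓ μ k p = ∑ r ∈ p, c r (φ μ r))
    (V : (ι → Finset R → ℝ) → ℝ)
    (hV : ∀ μ, V μ = ∑ r, ∫ u in (0:ℝ)..(φ μ r), c r u) :
    {μ ∈ Δ | ∀ k, ∀ p ∈ Pb k, 0 < μ k p → ∀ p' ∈ Pb k, ℓ μ k p ≤ ℓ μ k p'} =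
      {μ ∈ Δ | ∀ ν ∈ Δ, V μ ≤ V ν} ∧
    {μ ∈ Δ | ∀ ν ∈ Δ, V μ ≤ V ν}.Nonempty ∧
    Convex ℝ {μ ∈ Δ | ∀ ν ∈ Δ, V μ ≤ V ν} ∧
    IsCompact {μ ∈ Δ | ∀ ν ∈ Δ, V μ ≤ V ν} := by
  obtain rfl : Δ = Set.univ.pi fun k => simplexOn (Pb k) :=
    hΔ.trans (Set.ext fun μ => ⟨fun h k _ => h k, fun h k => h k (Set.mem_univ k)⟩)
  obtain rfl : φ = fun μ r => load Pb m r μ :=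
    funext₂ fun μ r => (hφ μ r).trans (load_apply Pb m r μ).symm
  obtain rfl : ℓ = fun μ _ p => bundleCost Pb m c μ p := funext fun μ => funext₂ (hℓ μ)
  obtain rfl : V = potential Pb m c := funext hV
  have hcompact := isCompact_univ_pi fun k => isCompact_simplexOn (Pb k)
  have hcont : Continuous (potential Pb m c) := continuous_iff_continuousAt.2 fun μ =>
    (hasFDerivAt_potential Pb m c hc_cont μ).continuousAt
  obtain ⟨μ₀, hμ₀, hmin₀⟩ := hcompact.exists_isMinOn
    (Set.univ_pi_nonempty_iff.2 fun k => simplexOn_nonempty (hPb k)) hcont.continuousOn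
  refine ⟨setOf_isNashEquilibrium_eq Pb m c hm hc_cont hc_mono, ?_⟩
  rw [sep_forall_le_eq_sep_le hμ₀ hmin₀]
  exact ⟨⟨μ₀, hμ₀, le_rfl⟩, (convexOn_potential Pb m c hc_mono).convex_le _,
    hcompact.inter_right (isClosed_le hcont continuous_const)⟩

theorem stmt14 {R ι : Type*} [Fintype R] [DecidableEq R] [Fintype ι]
    (Pb : ι → Finset (Finset R)) (hPb : ∀ k, (Pb k).Nonempty)
    (m : ι → ℝ) (hm : ∀ k, 0 < m k)
    (c : R → ℝ → ℝ) (hc_cont : ∀ r, Continuous (c r)) (hc_mono : ∀ r, Monotone (c r))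
    (hc_nonneg : ∀ r u, 0 ≤ c r u)
    (Δ : Set (ι → Finset R → ℝ))
    (hΔ : Δ = {μ | ∀ k, (∀ p, 0 ≤ μ k p) ∧ (∀ p ∉ Pb k, μ k p = 0) ∧
      ∑ p ∈ Pb k, μ k p = 1})
    (φ : (ι → Finset R → ℝ) → R → ℝ)
    (hφ : ∀ μ r, φ μ r = ∑ k, m k * ∑ p ∈ (Pb k).filter (fun p => r ∈ p), μ k p)
    (ℓ : (ι → Finset R → ℝ) → ι → Finset R → ℝ)
    (hℓ : ∀ μ k p, ℓ μ k p = ∑ r ∈ p, c r (φ μ r))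
    (V : (ι → Finset R → ℝ) → ℝ)
    (hV : ∀ μ, V μ = ∑ r, ∫ u in (0:ℝ)..(φ μ r), c r u) :
    {μ ∈ Δ | ∀ k, ∀ p ∈ Pb k, 0 < μ k p → ∀ p' ∈ Pb k, ℓ μ k p ≤ ℓ μ k p'} =
      {μ ∈ Δ | ∀ ν ∈ Δ, V μ ≤ V ν} ∧
    {μ ∈ Δ | ∀ ν ∈ Δ, V μ ≤ V ν}.Nonempty ∧
    Convex ℝ {μ ∈ Δ | ∀ ν ∈ Δ, V μ ≤ V ν} ∧
    IsCompact {μ ∈ Δ | ∀ ν ∈ Δ, V μ ≤ V ν} :=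
  stmt14_general Pb hPb m hm c hc_cont hc_mono Δ hΔ φ hφ ℓ hℓ V hV
end
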